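/- Let G be a finite simple graph with a clique vertex-partition Π = {W_1, …, W_p}, and let t ≥ 2 be an integer. Then the t-clique-free complex CF_t(G(Π, t)) of the t-clique whiskering is (t−2)-decomposable; in particular, CF_t(G(Π, t)) is shellable. -/

import Mathlib

/-- The `t`-clique-free complex of a graph `G`: faces are the finite vertex sets
containing no `t`-clique of `G`. -/
def cliqueFreeComplex {V : Type*} (G : SimpleGraph V) (t : ℕ) : Set (Finset V) :=
  {A : Finset V | ∀ B ⊆ A, ¬ G.IsNClique t B}

/-- Deletion of a face from a simplicial complex: the faces not containing `σ`. -/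
def delC {V : Type*} (Δ : Set (Finset V)) (σ : Finset V) : Set (Finset V) :=
  {F | F ∈ Δ ∧ ¬ σ ⊆ F}

/-- Link of a face in a simplicial complex. -/
def linkC {V : Type*} [DecidableEq V] (Δ : Set (Finset V)) (σ : Finset V) :
    Set (Finset V) :=
  {F | F ∈ Δ ∧ Disjoint F σ ∧ F ∪ σ ∈ Δ}

/-- A shedding face: a face `σ` such that for every face `τ ⊇ σ` and every `v ∈ σ`
there is a vertex `w ∉ τ` with `(τ ∪ {w}) \ {v}` a face. -/
def IsSheddingFace {V : Type*} [DecidableEq V] (Δ : Set (Finset V)) (σ : Finset V) :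
    Prop :=
  σ ∈ Δ ∧ ∀ τ ∈ Δ, σ ⊆ τ → ∀ v ∈ σ, ∃ w, w ∉ τ ∧ (insert w τ).erase v ∈ Δ

/-- A simplex: the void complex, or the full power set of a finite set
(this includes the irrelevant complex `{∅}`). -/
def IsSimplexComplex {V : Type*} (Δ : Set (Finset V)) : Prop :=
  Δ = ∅ ∨ ∃ F : Finset V, Δ = {A : Finset V | A ⊆ F}

/-- `k`-decomposability: `Δ` is a simplex, or has a shedding face `σ` with
`dim σ ≤ k` (i.e. `σ.card ≤ k + 1`) whose deletion and link are `k`-decomposable. -/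
inductive KDecomposable {V : Type*} [DecidableEq V] (k : ℕ) : Set (Finset V) → Prop
  | of_simplex {Δ : Set (Finset V)} (h : IsSimplexComplex Δ) : KDecomposable k Δ
  | of_shedding {Δ : Set (Finset V)} (σ : Finset V) (hshed : IsSheddingFace Δ σ)
      (hdim : σ.card ≤ k + 1) (hdel : KDecomposable k (delC Δ σ))
      (hlink : KDecomposable k (linkC Δ σ)) : KDecomposable k Δ

/-- The facets (maximal faces) of a simplicial complex. -/
def Facets {V : Type*} (Δ : Set (Finset V)) : Set (Finset V) :=
  {F | F ∈ Δ ∧ ∀ A ∈ Δ, F ⊆ A → F = A}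

/-- Shellability: the facets admit a linear order `F 0, …, F (s-1)` such that for all
`i < j` there are `v ∈ F j \ F i` and `l < j` with `F j \ F l = {v}`. -/
def IsShellable {V : Type*} [DecidableEq V] (Δ : Set (Finset V)) : Prop :=
  ∃ (s : ℕ) (F : Fin s → Finset V),
    (∀ i, F i ∈ Facets Δ) ∧ Function.Injective F ∧
    (∀ A ∈ Facets Δ, ∃ i, F i = A) ∧
    ∀ i j : Fin s, i < j →
      ∃ v ∈ F j \ F i, ∃ l, l < j ∧ F j \ F l = ({v} : Finset V)

/-- A clique vertex-partition of `G`: a family `W 1, …, W p` of pairwise disjoint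
(possibly empty) cliques of `G` whose union is `V(G)`. -/
structure IsCliqueVertexPartition {V : Type*} (G : SimpleGraph V) {p : ℕ}
    (W : Fin p → Finset V) : Prop where
  disjoint : ∀ i j, i ≠ j → Disjoint (W i) (W j)
  cover : ∀ v : V, ∃ i, v ∈ W i
  clique : ∀ i, G.IsClique ↑(W i)

/-- The defining relation of the `t`-clique whiskering `G(Π, t)`: keep the edges of
`G` and, for each part `W i`, make `W i` together with the `t - 1` new vertices
`x_{i,1}, …, x_{i,t-1}` (`Sum.inr (i, k)`) into a clique. -/
def whiskerRel {V : Type*} (G : SimpleGraph V) {p : ℕ} (W : Fin p → Finset V)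
    (t : ℕ) : (V ⊕ Fin p × Fin (t - 1)) → (V ⊕ Fin p × Fin (t - 1)) → Prop
  | Sum.inl a, Sum.inl b => G.Adj a b
  | Sum.inl a, Sum.inr q => a ∈ W q.1
  | Sum.inr q, Sum.inl a => a ∈ W q.1
  | Sum.inr q, Sum.inr r => q.1 = r.1

/-- The `t`-clique whiskering `G(Π, t)` of `G` with respect to the clique
vertex-partition `Π = {W 1, …, W p}`. -/
def whiskerGraph {V : Type*} (G : SimpleGraph V) {p : ℕ} (W : Fin p → Finset V)
    (t : ℕ) : SimpleGraph (V ⊕ Fin p × Fin (t - 1)) :=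
  SimpleGraph.fromRel (whiskerRel G W t)


/-!
Every vertex `a ∈ W i` of `G` is a shedding vertex: the part `W i` together with its `t - 1`
whiskers is a clique of `G(Π, t)`, and every clique through a whisker stays inside that part,
so in a face `a` can always be exchanged for an unused whisker of part `i`. Links of vertices
are no longer clique-free complexes, so the induction runs over the complexes
`{F ⊆ S | F ∪ Λ is a face}`, under the invariant that `Λ` and the whiskers left in `S` can
still fill every part up to `t - 1` vertices. Once `S` consists of whiskers only and the complex
is not a simplex, some part `i` has a surplus of whiskers in `S`; a set `σ` of
`t - #(Λ ∩ part i)` of them lies in no face, and removing `σ` one vertex at a time uses shedding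
faces of at most `t - 1` vertices. Shellability follows by concatenating shellings of the
deletion and of the link of each shedding face.
-/

open Finset

section Shelling

variable {α : Type*}

lemma IsLowerSet.delC {Δ : Set (Finset α)} (hΔ : IsLowerSet Δ) (σ : Finset α) :
    IsLowerSet (delC Δ σ) :=
  fun _ _ hFG hG => ⟨hΔ hFG hG.1, fun hσ => hG.2 (hσ.trans hFG)⟩

lemma IsLowerSet.linkC [DecidableEq α] {Δ : Set (Finset α)} (hΔ : IsLowerSet Δ)
    (σ : Finset α) : IsLowerSet (linkC Δ σ) :=
  fun _ _ hFG hG =>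
    ⟨hΔ hFG hG.1, hG.2.1.mono_left hFG, hΔ (union_subset_union_left hFG) hG.2.2⟩

lemma exists_mem_facets_superset [Finite α] {Δ : Set (Finset α)} {τ : Finset α}
    (hτ : τ ∈ Δ) : ∃ F ∈ Facets Δ, τ ⊆ F := by
  obtain ⟨F, ⟨hFΔ, hτF⟩, hmax⟩ :=
    (Set.toFinite {A ∈ Δ | τ ⊆ A}).exists_maximalFor id _ ⟨τ, hτ, subset_rfl⟩
  exact ⟨F, ⟨hFΔ, fun A hA hFA => hFA.antisymm (hmax ⟨hA, hτF.trans hFA⟩ hFA)⟩, hτF⟩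

variable [DecidableEq α]

lemma facets_delC {Δ : Set (Finset α)} {σ : Finset α} (hΔ : IsLowerSet Δ)
    (hσ : IsSheddingFace Δ σ) : Facets (delC Δ σ) = {F ∈ Facets Δ | ¬σ ⊆ F} := by
  ext F
  refine ⟨fun ⟨⟨hFΔ, hσF⟩, hmax⟩ => ⟨⟨hFΔ, fun A hA hFA => ?_⟩, hσF⟩,
    fun ⟨⟨hFΔ, hmax⟩, hσF⟩ => ⟨⟨hFΔ, hσF⟩, fun A hA hFA => hmax A hA.1 hFA⟩⟩
  by_contra hFA'
  obtain ⟨w, hwA, hwF⟩ := exists_of_ssubset (hFA.ssubset_of_ne hFA')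
  have hwFΔ : insert w F ∈ Δ := hΔ (insert_subset hwA hFA) hA
  have above : ∀ u ∉ F, insert u F ∈ Δ → σ ⊆ insert u F := fun u hu huF => by
    by_contra h
    exact hu ((hmax _ ⟨huF, h⟩ (subset_insert u F)) ▸ mem_insert_self u F)
  have hwσ : w ∈ σ := by
    by_contra hwσ
    exact hσF fun z hz => (mem_insert.1 (above w hwF hwFΔ hz)).resolve_left (by grind)
  -- shedding `w` from `insert w F` gives a face `insert w' F` above `F` without `w ∈ σ`
  obtain ⟨w', hw', hw'Δ⟩ := hσ.2 _ hwFΔ (above w hwF hwFΔ) w hwσ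
  have hw'F : w' ∉ F := fun h => hw' (mem_insert_of_mem h)
  have heq : (insert w' (insert w F)).erase w = insert w' F := by grind
  rw [heq] at hw'Δ
  have := above w' hw'F hw'Δ hwσ
  grind

lemma image_union_facets_linkC {Δ : Set (Finset α)} {σ : Finset α} (hΔ : IsLowerSet Δ) :
    (· ∪ σ) '' Facets (linkC Δ σ) = {G ∈ Facets Δ | σ ⊆ G} := by
  ext G
  constructor
  · rintro ⟨F, ⟨⟨-, hFσ, hFσΔ⟩, hmax⟩, rfl⟩
    refine ⟨⟨hFσΔ, fun A hA hFA => ?_⟩, subset_union_right⟩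
    have hσA : σ ⊆ A := subset_union_right.trans hFA
    have hAσ : A \ σ ∈ linkC Δ σ :=
      ⟨hΔ sdiff_subset hA, sdiff_disjoint, by rwa [sdiff_union_of_subset hσA]⟩
    rw [hmax _ hAσ (subset_sdiff.2 ⟨subset_union_left.trans hFA, hFσ⟩)]
    exact sdiff_union_of_subset hσA
  · rintro ⟨⟨hGΔ, hmax⟩, hσG⟩
    refine ⟨G \ σ, ⟨⟨hΔ sdiff_subset hGΔ, sdiff_disjoint, ?_⟩, fun A hA hGA => ?_⟩, ?_⟩
    · rwa [sdiff_union_of_subset hσG]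
    · have := hmax _ hA.2.2
        (by rw [← sdiff_union_of_subset hσG]; exact union_subset_union_left hGA)
      rw [this, union_sdiff_cancel_right hA.2.1]
    · exact sdiff_union_of_subset hσG

def IsShellingOrder {s : ℕ} (F : Fin s → Finset α) : Prop :=
  ∀ i j : Fin s, i < j → ∃ v ∈ F j \ F i, ∃ l, l < j ∧ F j \ F l = {v}

lemma IsShellingOrder.append {m n : ℕ} {A : Fin m → Finset α} {B : Fin n → Finset α}
    (hA : IsShellingOrder A) (hB : IsShellingOrder B)
    (hAB : ∀ i j, ∃ v ∈ B j \ A i, ∃ l, B j \ A l = {v}) :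
    IsShellingOrder (Fin.append A B) := by
  intro a b hab
  induction a using Fin.addCases with
  | left i =>
    induction b using Fin.addCases with
    | left j =>
      obtain ⟨v, hv, l, hl, he⟩ := hA i j ((Fin.strictMono_castAdd n).lt_iff_lt.1 hab)
      exact ⟨v, by simpa using hv, Fin.castAdd n l, (Fin.strictMono_castAdd n).lt_iff_lt.2 hl,
        by simpa using he⟩
    | right j =>
      obtain ⟨v, hv, l, he⟩ := hAB i j
      exact ⟨v, by simpa using hv, Fin.castAdd n l, by rw [Fin.lt_def]; simp; omega,
        by simpa using he⟩
  | right i =>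
    induction b using Fin.addCases with
    | left j => rw [Fin.lt_def] at hab; simp at hab; omega
    | right j =>
      obtain ⟨v, hv, l, hl, he⟩ := hB i j ((Fin.natAdd_lt_natAdd_iff m).1 hab)
      exact ⟨v, by simpa using hv, Fin.natAdd m l, (Fin.natAdd_lt_natAdd_iff m).2 hl,
        by simpa using he⟩

lemma IsShellingOrder.union_right {s : ℕ} {F : Fin s → Finset α} (hF : IsShellingOrder F)
    {σ : Finset α} (hσ : ∀ j, Disjoint (F j) σ) : IsShellingOrder fun j => F j ∪ σ := by
  have key : ∀ i j, (F j ∪ σ) \ (F i ∪ σ) = F j \ F i := fun i j => by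
    rw [union_sdiff_distrib, sdiff_union_distrib, sdiff_union_distrib, sdiff_self,
      (hσ j).sdiff_eq_left]
    grind
  simpa only [IsShellingOrder, key] using hF

lemma exists_sdiff_eq_singleton_of_isSheddingFace [Finite α] {Δ : Set (Finset α)}
    {σ F G : Finset α} (hσ : IsSheddingFace Δ σ) (hσF : ¬σ ⊆ F) (hG : G ∈ Facets Δ)
    (hσG : σ ⊆ G) : ∃ v ∈ G \ F, ∃ F' ∈ Facets Δ, ¬σ ⊆ F' ∧ G \ F' = {v} := by
  obtain ⟨v, hvσ, hvF⟩ := not_subset.1 hσF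
  obtain ⟨w, hwG, hwΔ⟩ := hσ.2 G hG.1 hσG v hvσ
  obtain ⟨F', hF', hsub⟩ := exists_mem_facets_superset hwΔ
  have hvF' : v ∉ F' := fun hvF' => by
    have hGF' : G ⊆ F' := fun z hz => by
      by_cases hzv : z = v
      · exact hzv ▸ hvF'
      · exact hsub (mem_erase.2 ⟨hzv, mem_insert_of_mem hz⟩)
    refine hwG ((hG.2 F' hF'.1 hGF') ▸ hsub (mem_erase.2 ⟨?_, mem_insert_self w G⟩))
    rintro rfl
    exact hwG (hσG hvσ)
  refine ⟨v, mem_sdiff.2 ⟨hσG hvσ, hvF⟩, F', hF', fun h => hvF' (h hvσ), ?_⟩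
  ext z
  simp only [mem_sdiff, mem_singleton]
  refine ⟨fun ⟨hzG, hzF'⟩ => ?_, fun hz => hz ▸ ⟨hσG hvσ, hvF'⟩⟩
  by_contra hzv
  exact hzF' (hsub (mem_erase.2 ⟨hzv, mem_insert_of_mem hzG⟩))

lemma IsSimplexComplex.isShellable {Δ : Set (Finset α)} (h : IsSimplexComplex Δ) :
    IsShellable Δ := by
  rcases h with rfl | ⟨F, rfl⟩
  · exact ⟨0, Fin.elim0, fun i => i.elim0, fun i => i.elim0, fun A hA => hA.1.elim,
      fun i => i.elim0⟩
  · have hF : F ∈ {A | A ⊆ F} := Set.mem_ofPred.2 subset_rfl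
    exact ⟨1, fun _ => F, fun _ => ⟨hF, fun A hA h => h.antisymm hA⟩,
      fun i j _ => Subsingleton.elim i j, fun A hA => ⟨0, (hA.2 F hF hA.1).symm⟩,
      fun i j hij => absurd (Subsingleton.elim i j) hij.ne⟩

/-- The shelling lists the facets of the deletion of the shedding face `σ` first, then the
facets containing `σ`, i.e. the link's facets joined with `σ`. -/
theorem KDecomposable.isShellable [Finite α] {k : ℕ} {Δ : Set (Finset α)}
    (h : KDecomposable k Δ) (hΔ : IsLowerSet Δ) : IsShellable Δ := by
  induction h with
  | of_simplex h => exact h.isShellable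
  | @of_shedding Δ σ hσ _ _ _ ihdel ihlink =>
    obtain ⟨m, A, hAf, hAinj, hAsurj, hA⟩ := ihdel (hΔ.delC σ)
    obtain ⟨n, B, hBf, hBinj, hBsurj, hB⟩ := ihlink (hΔ.linkC σ)
    rw [facets_delC hΔ hσ] at hAf hAsurj
    have hBσ : ∀ j, B j ∪ σ ∈ {G ∈ Facets Δ | σ ⊆ G} := fun j =>
      image_union_facets_linkC hΔ ▸ ⟨B j, hBf j, rfl⟩
    have hBdisj : ∀ j, Disjoint (B j) σ := fun j => (hBf j).1.2.1
    refine ⟨m + n, Fin.append A fun j => B j ∪ σ, fun a => ?_, ?_, fun G hG => ?_, ?_⟩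
    · induction a using Fin.addCases <;> simp [(hAf _).1, (hBσ _).1]
    · refine Fin.append_injective_iff.2 ⟨hAinj, fun i j hij => hBinj ?_,
        fun i j hij => (hAf i).2 (hij ▸ subset_union_right)⟩
      rw [← union_sdiff_cancel_right (hBdisj i), show B i ∪ σ = B j ∪ σ from hij,
        union_sdiff_cancel_right (hBdisj j)]
    · by_cases hσG : σ ⊆ G
      · obtain ⟨F, hF, rfl⟩ : G ∈ (· ∪ σ) '' Facets (linkC Δ σ) := by
          rw [image_union_facets_linkC hΔ]
          exact ⟨hG, hσG⟩
        obtain ⟨j, rfl⟩ := hBsurj F hF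
        exact ⟨Fin.natAdd m j, by simp⟩
      · obtain ⟨i, rfl⟩ := hAsurj G ⟨hG, hσG⟩
        exact ⟨Fin.castAdd n i, by simp⟩
    · refine IsShellingOrder.append hA (IsShellingOrder.union_right hB hBdisj) fun i j => ?_
      obtain ⟨v, hv, F', hF', hσF', he⟩ :=
        exists_sdiff_eq_singleton_of_isSheddingFace hσ (hAf i).2 (hBσ j).1 (hBσ j).2
      obtain ⟨l, rfl⟩ := hAsurj F' ⟨hF', hσF'⟩
      exact ⟨v, hv, l, he⟩

end Shelling

section RestrictLink

variable {α : Type*} [DecidableEq α] {Δ : Set (Finset α)}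

/-- The link of `Λ` in the restriction of `Δ` to `S ∪ Λ` (for `S` disjoint from `Λ ∈ Δ`). -/
def restrictLink (Δ : Set (Finset α)) (S Λ : Finset α) : Set (Finset α) :=
  {F | F ⊆ S ∧ F ∪ Λ ∈ Δ}

omit [DecidableEq α] in
lemma delC_eq_self {σ : Finset α} (h : ∀ F ∈ Δ, ¬σ ⊆ F) : delC Δ σ = Δ :=
  Set.ext fun F => ⟨fun hF => hF.1, fun hF => ⟨hF, h F hF⟩⟩

omit [DecidableEq α] in
lemma delC_delC_of_subset {σ σ' : Finset α} (h : σ ⊆ σ') :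
    delC (delC Δ σ') σ = delC Δ σ :=
  Set.ext fun _ =>
    ⟨fun hF => ⟨hF.1.1, hF.2⟩, fun hF => ⟨⟨hF.1, fun h' => hF.2 (h.trans h')⟩, hF.2⟩⟩

lemma linkC_delC (σ τ : Finset α) : linkC (delC Δ σ) τ = delC (linkC Δ τ) (σ \ τ) := by
  ext F
  have hσ : σ ⊆ F ∪ τ ↔ σ \ τ ⊆ F := by rw [union_comm]; exact sdiff_le_iff.symm
  simp only [linkC, delC, Set.mem_ofPred_eq, hσ]
  exact ⟨fun h => ⟨⟨h.1.1, h.2.1, h.2.2.1⟩, h.2.2.2⟩,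
    fun h => ⟨⟨h.1.1, fun h' => h.2 (sdiff_subset.trans h')⟩, h.1.2.1, h.1.2.2, h.2⟩⟩

lemma restrictLink_univ_empty [Fintype α] : restrictLink Δ univ ∅ = Δ :=
  Set.ext fun _ => by simp [restrictLink]

lemma restrictLink_eq_empty (hΔ : IsLowerSet Δ) {S Λ : Finset α} (hΛ : Λ ∉ Δ) :
    restrictLink Δ S Λ = ∅ :=
  Set.eq_empty_of_forall_notMem fun _ hF => hΛ (hΔ subset_union_right hF.2)

lemma restrictLink_eq_of_union_mem (hΔ : IsLowerSet Δ) {S Λ : Finset α} (hSΛ : S ∪ Λ ∈ Δ) :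
    restrictLink Δ S Λ = {F | F ⊆ S} :=
  Set.ext fun _ => ⟨fun hF => hF.1, fun hF => ⟨hF, hΔ (union_subset_union_left hF) hSΛ⟩⟩

lemma restrictLink_erase_of_insert_notMem (hΔ : IsLowerSet Δ) {S Λ : Finset α} {u : α}
    (hu : insert u Λ ∉ Δ) : restrictLink Δ (S.erase u) Λ = restrictLink Δ S Λ := by
  refine Set.ext fun F => ⟨fun hF => ⟨hF.1.trans (erase_subset u S), hF.2⟩,
    fun hF => ⟨subset_erase.2 ⟨hF.1, fun huF => hu ?_⟩, hF.2⟩⟩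
  exact hΔ (insert_subset (mem_union_left Λ huF) subset_union_right) hF.2

lemma delC_restrictLink_singleton {S Λ : Finset α} (v : α) :
    delC (restrictLink Δ S Λ) {v} = restrictLink Δ (S.erase v) Λ :=
  Set.ext fun _ =>
    ⟨fun hF => ⟨subset_erase.2 ⟨hF.1.1, fun hv => hF.2 (singleton_subset_iff.2 hv)⟩, hF.1.2⟩,
      fun hF => ⟨⟨hF.1.trans (erase_subset v S), hF.2⟩,
        fun hv => (subset_erase.1 hF.1).2 (singleton_subset_iff.1 hv)⟩⟩

lemma linkC_restrictLink (hΔ : IsLowerSet Δ) {S Λ σ : Finset α} (hσ : σ ⊆ S) :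
    linkC (restrictLink Δ S Λ) σ = restrictLink Δ (S \ σ) (Λ ∪ σ) := by
  ext F
  have hF : F ∪ (Λ ∪ σ) = F ∪ σ ∪ Λ := by rw [union_comm Λ, union_assoc]
  simp only [linkC, restrictLink, Set.mem_ofPred_eq, subset_sdiff, hF]
  refine ⟨fun h => ⟨⟨h.1.1, h.2.1⟩, h.2.2.2⟩,
    fun h => ⟨⟨h.1.1, ?_⟩, h.1.2, ⟨union_subset h.1.1 hσ, h.2⟩⟩⟩
  exact hΔ (union_subset_union_left subset_union_left) h.2

lemma linkC_delC_restrictLink_erase (hΔ : IsLowerSet Δ) {S Λ σ : Finset α} {x : α}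
    (hx : x ∈ σ) (hσ : σ ⊆ S) :
    linkC (delC (restrictLink Δ S Λ) σ) (σ.erase x) =
      restrictLink Δ (S \ σ) (Λ ∪ σ.erase x) := by
  rw [linkC_delC, sdiff_erase_self hx, linkC_restrictLink hΔ ((erase_subset x σ).trans hσ),
    delC_restrictLink_singleton, ← sdiff_insert, insert_erase hx]

end RestrictLink

section CliqueFree

variable {β : Type*} [DecidableEq β] {H : SimpleGraph β} {t : ℕ}

omit [DecidableEq β] in
lemma isLowerSet_cliqueFreeComplex : IsLowerSet (cliqueFreeComplex H t) :=
  fun _ _ hYX hX B hB => hX B (hB.trans hYX)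

lemma card_inter_lt_of_mem_cliqueFreeComplex {P X : Finset β} (hP : H.IsClique (P : Set β))
    (hX : X ∈ cliqueFreeComplex H t) : #(X ∩ P) < t := by
  by_contra! h
  obtain ⟨B, hB, rfl⟩ := exists_subset_card_eq h
  exact hX B (hB.trans inter_subset_left)
    ⟨hP.subset (coe_subset.2 (hB.trans inter_subset_right)), rfl⟩

omit [DecidableEq β] in
lemma subset_of_isClique_of_neighborSet_subset {P B : Finset β} {x : β} (hxP : x ∈ P)
    (hx : H.neighborSet x ⊆ P) (hB : H.IsClique (B : Set β)) (hxB : x ∈ B) : B ⊆ P :=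
  fun y hy => (eq_or_ne y x).elim (fun h => h ▸ hxP) fun h => hx (hB hxB hy h.symm)

/-- Vertices whose neighbourhoods lie in `P` only extend cliques inside `P`. -/
lemma union_mem_cliqueFreeComplex {P σ X : Finset β}
    (hσ : ∀ x ∈ σ, x ∈ P ∧ H.neighborSet x ⊆ P) (hX : X ∈ cliqueFreeComplex H t)
    (hcard : #((σ ∪ X) ∩ P) < t) : σ ∪ X ∈ cliqueFreeComplex H t := by
  intro B hB hBcl
  by_cases hBσ : Disjoint B σ
  · exact hX B (fun z hz => (mem_union.1 (hB hz)).resolve_left (disjoint_left.1 hBσ hz)) hBcl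
  · obtain ⟨x, hxB, hxσ⟩ := not_disjoint_iff.1 hBσ
    have hBP := subset_of_isClique_of_neighborSet_subset (hσ x hxσ).1 (hσ x hxσ).2
      hBcl.isClique hxB
    have := card_le_card (subset_inter hB hBP)
    rw [hBcl.card_eq] at this
    omega

lemma insert_erase_mem_cliqueFreeComplex {P X : Finset β} {v x : β}
    (hP : H.IsClique (P : Set β)) (hxP : x ∈ P) (hx : H.neighborSet x ⊆ P)
    (hX : X ∈ cliqueFreeComplex H t) (hv : v ∈ X ∩ P) :
    insert x (X.erase v) ∈ cliqueFreeComplex H t := by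
  rw [insert_eq]
  refine union_mem_cliqueFreeComplex (P := P) (by simpa using ⟨hxP, hx⟩)
    (isLowerSet_cliqueFreeComplex (erase_subset v X) hX) ?_
  have hsub : ({x} ∪ X.erase v) ∩ P ⊆ insert x ((X ∩ P).erase v) := by
    intro z
    simp only [mem_inter, mem_union, mem_singleton, mem_erase, mem_insert]
    tauto
  have := card_le_card hsub
  have := card_insert_le x ((X ∩ P).erase v)
  have := card_erase_of_mem hv
  have := card_pos.2 ⟨v, hv⟩
  have := card_inter_lt_of_mem_cliqueFreeComplex hP hX
  omega

end CliqueFree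

section Whiskering

variable {V : Type*} {p t : ℕ}

def whiskers (V : Type*) {p : ℕ} (t : ℕ) (i : Fin p) : Finset (V ⊕ Fin p × Fin (t - 1)) :=
  ({i} ×ˢ univ).map .inr

def part (W : Fin p → Finset V) (t : ℕ) (i : Fin p) : Finset (V ⊕ Fin p × Fin (t - 1)) :=
  (W i).disjSum ({i} ×ˢ univ)

@[simp] lemma inl_notMem_whiskers {a : V} {i : Fin p} : Sum.inl a ∉ whiskers V t i := by
  simp [whiskers]

@[simp] lemma inr_mem_whiskers {i j : Fin p} {k : Fin (t - 1)} :
    Sum.inr (j, k) ∈ whiskers V t i ↔ j = i := by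
  simp [whiskers, eq_comm]

@[simp] lemma inl_mem_part {W : Fin p → Finset V} {a : V} {i : Fin p} :
    Sum.inl a ∈ part W t i ↔ a ∈ W i := by
  simp [part]

@[simp] lemma inr_mem_part {W : Fin p → Finset V} {i j : Fin p} {k : Fin (t - 1)} :
    Sum.inr (j, k) ∈ part W t i ↔ j = i := by
  simp [part, eq_comm]

lemma card_whiskers (i : Fin p) : #(whiskers V t i) = t - 1 := by
  simp [whiskers]

lemma whiskers_subset_part (W : Fin p → Finset V) (i : Fin p) :
    whiskers V t i ⊆ part W t i := by
  rintro (a | ⟨j, k⟩) <;> simp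

lemma disjoint_whiskers_part (W : Fin p → Finset V) {i j : Fin p} (hij : i ≠ j) :
    Disjoint (whiskers V t i) (part W t j) := by
  rw [disjoint_left]
  rintro (a | ⟨l, k⟩) <;> simp
  grind

variable {G : SimpleGraph V} {W : Fin p → Finset V}

lemma isClique_part {i : Fin p} (hW : G.IsClique (W i : Set V)) :
    (whiskerGraph G W t).IsClique (part W t i : Set (V ⊕ Fin p × Fin (t - 1))) := by
  rintro (a | ⟨j, k⟩) hx (b | ⟨l, m⟩) hy hne <;>
    simp_all [whiskerGraph, whiskerRel]
  exact Or.inl (hW hx hy hne)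

lemma neighborSet_subset_part {i : Fin p} {x : V ⊕ Fin p × Fin (t - 1)}
    (hx : x ∈ whiskers V t i) :
    (whiskerGraph G W t).neighborSet x ⊆ (part W t i : Set (V ⊕ Fin p × Fin (t - 1))) := by
  rcases x with a | ⟨j, k⟩
  · simp at hx
  · rintro (b | ⟨l, m⟩) h <;> simp_all [whiskerGraph, whiskerRel, eq_comm]

end Whiskering

section Invariant

variable {V : Type*} [DecidableEq V] {p t : ℕ} {W : Fin p → Finset V}
  {S Λ : Finset (V ⊕ Fin p × Fin (t - 1))}

/-- The invariant of the induction: it keeps an unused whisker available whenever a vertex of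
`G` is shed. -/
def EnoughWhiskers (W : Fin p → Finset V) (t : ℕ) (S Λ : Finset (V ⊕ Fin p × Fin (t - 1))) :
    Prop :=
  ∀ i, t - 1 ≤ #(S ∩ whiskers V t i) + #(Λ ∩ part W t i)

lemma enoughWhiskers_univ_empty [Fintype V] : EnoughWhiskers W t univ ∅ := fun i => by
  simp [card_whiskers]

lemma EnoughWhiskers.erase_inl (h : EnoughWhiskers W t S Λ) (a : V) :
    EnoughWhiskers W t (S.erase (.inl a)) Λ := fun i => by
  rw [erase_inter, erase_eq_of_notMem (by simp)]
  exact h i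

lemma EnoughWhiskers.mono_right {Λ' : Finset (V ⊕ Fin p × Fin (t - 1))}
    (h : EnoughWhiskers W t S Λ) (hΛ : Λ ⊆ Λ') : EnoughWhiskers W t S Λ' :=
  fun i => (h i).trans (add_le_add_right (card_le_card (inter_subset_inter_right hΛ)) _)

lemma EnoughWhiskers.sdiff_union_erase (h : EnoughWhiskers W t S Λ) (hdisj : Disjoint S Λ)
    {i : Fin p} (hslack : t ≤ #(S ∩ whiskers V t i) + #(Λ ∩ part W t i))
    {σ : Finset (V ⊕ Fin p × Fin (t - 1))} {x : V ⊕ Fin p × Fin (t - 1)}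
    (hσ : σ ⊆ S ∩ whiskers V t i) (hx : x ∈ σ) :
    EnoughWhiskers W t (S \ σ) (Λ ∪ σ.erase x) := by
  have hσS : σ.erase x ⊆ S := (erase_subset x σ).trans (hσ.trans inter_subset_left)
  have hσP : σ.erase x ⊆ part W t i :=
    (erase_subset x σ).trans (hσ.trans (inter_subset_right.trans (whiskers_subset_part W i)))
  intro j
  have hΛ : #(Λ ∩ part W t j) ≤ #((Λ ∪ σ.erase x) ∩ part W t j) :=
    card_le_card (inter_subset_inter_right subset_union_left)
  obtain rfl | hij := eq_or_ne i j
  · have hS : #(S ∩ whiskers V t i) ≤ #((S \ σ) ∩ whiskers V t i) + #σ := by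
      refine (card_le_card fun z hz => ?_).trans (card_union_le _ _)
      by_cases hzσ : z ∈ σ
      · exact mem_union_right _ hzσ
      · exact mem_union_left _ (by simp_all)
    have hΛσ : #(Λ ∩ part W t i) + #(σ.erase x) ≤ #((Λ ∪ σ.erase x) ∩ part W t i) := by
      rw [← card_union_of_disjoint]
      · refine card_le_card (union_subset (inter_subset_inter_right subset_union_left) ?_)
        exact subset_inter subset_union_right hσP
      · exact hdisj.symm.mono inter_subset_left hσS
    have := card_erase_of_mem hx
    have := card_pos.2 ⟨x, hx⟩
    omega
  · have hS : S ∩ whiskers V t j ⊆ (S \ σ) ∩ whiskers V t j := fun z hz => by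
      have hzσ : z ∉ σ := fun hzσ => disjoint_left.1 (disjoint_whiskers_part W hij)
        (mem_inter.1 (hσ hzσ)).2 (whiskers_subset_part W j (mem_inter.1 hz).2)
      simp_all
    exact (h j).trans (add_le_add (card_le_card hS) hΛ)

end Invariant

section Decomposition

variable {V : Type*} [DecidableEq V] {p t : ℕ} {G : SimpleGraph V} {W : Fin p → Finset V}
  {S Λ τ : Finset (V ⊕ Fin p × Fin (t - 1))} {i : Fin p}

local notation "Γ" => cliqueFreeComplex (whiskerGraph G W t) t

lemma insert_erase_mem_restrictLink (hWi : G.IsClique (W i : Set V)) (hdisj : Disjoint S Λ)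
    (hτ : τ ∈ restrictLink Γ S Λ) {v x : V ⊕ Fin p × Fin (t - 1)} (hv : v ∈ τ)
    (hvP : v ∈ part W t i) (hxS : x ∈ S) (hx : x ∈ whiskers V t i) :
    (insert x τ).erase v ∈ restrictLink Γ S Λ := by
  refine ⟨(erase_subset _ _).trans (insert_subset hxS hτ.1), isLowerSet_cliqueFreeComplex ?_
    (insert_erase_mem_cliqueFreeComplex (isClique_part hWi) (whiskers_subset_part W i hx)
      (neighborSet_subset_part hx) hτ.2 (mem_inter.2 ⟨mem_union_left Λ hv, hvP⟩))⟩
  have hvΛ : v ∉ Λ := disjoint_left.1 hdisj (hτ.1 hv)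
  intro z
  simp only [mem_union, mem_erase, mem_insert]
  grind

lemma exists_whisker_notMem (hWi : G.IsClique (W i : Set V)) (hdisj : Disjoint S Λ)
    (hS : t - 1 ≤ #(S ∩ whiskers V t i) + #(Λ ∩ part W t i)) (hτ : τ ∈ restrictLink Γ S Λ)
    {v : V ⊕ Fin p × Fin (t - 1)} (hv : v ∈ τ) (hvP : v ∈ part W t i)
    (hvw : v ∉ whiskers V t i) : ∃ x ∈ S ∩ whiskers V t i, x ∉ τ := by
  by_contra! h
  have hvΛ : v ∉ Λ := disjoint_left.1 hdisj (hτ.1 hv)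
  have hsub : insert v (S ∩ whiskers V t i ∪ Λ ∩ part W t i) ⊆ (τ ∪ Λ) ∩ part W t i := by
    refine insert_subset (mem_inter.2 ⟨mem_union_left Λ hv, hvP⟩) (union_subset ?_ ?_)
    · exact fun z hz => mem_inter.2 ⟨mem_union_left Λ (h z hz),
        whiskers_subset_part W i (mem_inter.1 hz).2⟩
    · exact inter_subset_inter_right subset_union_right
  have hd : Disjoint (S ∩ whiskers V t i) (Λ ∩ part W t i) :=
    hdisj.mono inter_subset_left inter_subset_left
  have := card_le_card hsub
  rw [card_insert_of_notMem (by simp [hvw, hvΛ]), card_union_of_disjoint hd] at this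
  have := card_inter_lt_of_mem_cliqueFreeComplex (isClique_part hWi) hτ.2
  omega

lemma isSheddingFace_restrictLink_inl (hWi : G.IsClique (W i : Set V)) (hdisj : Disjoint S Λ)
    (hS : t - 1 ≤ #(S ∩ whiskers V t i) + #(Λ ∩ part W t i)) {a : V} (ha : a ∈ W i)
    (haS : .inl a ∈ S) (haΛ : insert (.inl a) Λ ∈ Γ) :
    IsSheddingFace (restrictLink Γ S Λ) {.inl a} := by
  refine ⟨⟨singleton_subset_iff.2 haS, by rwa [← insert_eq]⟩, fun τ hτ haτ v hv => ?_⟩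
  rw [mem_singleton] at hv
  subst hv
  have haτ := singleton_subset_iff.1 haτ
  obtain ⟨x, hx, hxτ⟩ := exists_whisker_notMem hWi hdisj hS hτ haτ (by simpa) (by simp)
  exact ⟨x, hxτ, insert_erase_mem_restrictLink hWi hdisj hτ haτ (by simpa)
    (mem_inter.1 hx).1 (mem_inter.1 hx).2⟩

lemma isSheddingFace_delC_restrictLink_erase (hWi : G.IsClique (W i : Set V))
    (hdisj : Disjoint S Λ) (hΛ : Λ ∈ Γ) {σ : Finset (V ⊕ Fin p × Fin (t - 1))}
    {x : V ⊕ Fin p × Fin (t - 1)} (hσ : σ ⊆ S ∩ whiskers V t i) (hx : x ∈ σ)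
    (hcard : #σ + #(Λ ∩ part W t i) ≤ t) :
    IsSheddingFace (delC (restrictLink Γ S Λ) σ) (σ.erase x) := by
  have hσS : σ ⊆ S := hσ.trans inter_subset_left
  have hσw : σ ⊆ whiskers V t i := hσ.trans inter_subset_right
  refine ⟨⟨⟨(erase_subset x σ).trans hσS, ?_⟩, fun h => notMem_erase x σ (h hx)⟩,
    fun τ hτ hστ v hv => ?_⟩
  · have hP : ∀ y ∈ σ.erase x, y ∈ part W t i ∧
        (whiskerGraph G W t).neighborSet y ⊆ (part W t i : Set _) := fun y hy =>
      ⟨whiskers_subset_part W i (hσw (mem_of_mem_erase hy)),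
        neighborSet_subset_part (hσw (mem_of_mem_erase hy))⟩
    refine union_mem_cliqueFreeComplex hP hΛ ?_
    have hsub : (σ.erase x ∪ Λ) ∩ part W t i ⊆ σ.erase x ∪ Λ ∩ part W t i := by
      rw [union_inter_distrib_right]
      exact union_subset_union_left inter_subset_left
    have := card_le_card hsub
    have := card_union_le (σ.erase x) (Λ ∩ part W t i)
    have := card_erase_of_mem hx
    have := card_pos.2 ⟨x, hx⟩
    omega
  · have hxτ : x ∉ τ := fun h => hτ.2 (insert_erase hx ▸ insert_subset h hστ)
    refine ⟨x, hxτ, insert_erase_mem_restrictLink hWi hdisj hτ.1 (hστ hv)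
      (whiskers_subset_part W i (hσw (mem_of_mem_erase hv))) (hσS hx) (hσw hx), fun h => ?_⟩
    exact notMem_erase v _ (h (mem_of_mem_erase hv))

lemma exists_card_inter_whiskers_add_ge (hΛ : Λ ∈ Γ)
    (hSΛ : S ∪ Λ ∉ Γ) (hS : ∀ a, .inl a ∉ S) :
    ∃ i, t ≤ #(S ∩ whiskers V t i) + #(Λ ∩ part W t i) := by
  simp only [cliqueFreeComplex, Set.mem_ofPred_eq, not_forall, not_not] at hSΛ
  obtain ⟨B, hB, hBcl⟩ := hSΛ
  obtain ⟨u, huB, huΛ⟩ : ∃ u ∈ B, u ∉ Λ := by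
    by_contra! h
    exact hΛ B h hBcl
  have huS : u ∈ S := (mem_union.1 (hB huB)).resolve_right huΛ
  obtain ⟨a⟩ | ⟨i, k⟩ := u
  · exact absurd huS (hS a)
  have hu : Sum.inr (i, k) ∈ whiskers V t i := by simp
  have hBP := subset_of_isClique_of_neighborSet_subset (whiskers_subset_part W i hu)
    (neighborSet_subset_part hu) hBcl.isClique huB
  have hsub : B ⊆ S ∩ whiskers V t i ∪ Λ ∩ part W t i := fun z hz => by
    have hzP := hBP hz
    rcases mem_union.1 (hB hz) with hzS | hzΛ
    · obtain ⟨b⟩ | ⟨j, l⟩ := z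
      · exact absurd hzS (hS b)
      · simp_all
    · exact mem_union_right _ (mem_inter.2 ⟨hzΛ, hzP⟩)
  exact ⟨i, hBcl.card_eq.symm.le.trans ((card_le_card hsub).trans (card_union_le _ _))⟩

/-- Removes the whiskers `σ` one at a time; the links along the way are again complexes of
the induction. -/
lemma kDecomposable_delC_restrictLink (hWi : G.IsClique (W i : Set V)) (hdisj : Disjoint S Λ)
    (hΛ : Λ ∈ Γ) (hS : EnoughWhiskers W t S Λ)
    (hslack : t ≤ #(S ∩ whiskers V t i) + #(Λ ∩ part W t i))
    (ih : ∀ S' ⊂ S, ∀ Λ', Disjoint S' Λ' → EnoughWhiskers W t S' Λ' →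
      KDecomposable (t - 2) (restrictLink Γ S' Λ'))
    {σ : Finset (V ⊕ Fin p × Fin (t - 1))} (hσ : σ ⊆ S ∩ whiskers V t i) (hne : σ.Nonempty)
    (hcard : #σ + #(Λ ∩ part W t i) ≤ t) :
    KDecomposable (t - 2) (delC (restrictLink Γ S Λ) σ) := by
  have hΓ : IsLowerSet Γ := isLowerSet_cliqueFreeComplex
  have hlink : ∀ {σ} {x}, σ ⊆ S ∩ whiskers V t i → x ∈ σ →
      KDecomposable (t - 2) (restrictLink Γ (S \ σ) (Λ ∪ σ.erase x)) := fun hσ hx =>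
    ih _ (sdiff_ssubset (hσ.trans inter_subset_left) ⟨_, hx⟩) _
      (disjoint_union_right.2 ⟨hdisj.mono_left sdiff_subset,
        sdiff_disjoint.mono_right (erase_subset _ _)⟩)
      (hS.sdiff_union_erase hdisj hslack hσ hx)
  induction hne using Finset.Nonempty.cons_induction with
  | singleton x =>
    have := hlink hσ (mem_singleton_self x)
    rwa [sdiff_singleton_eq_erase, erase_singleton, union_empty,
      ← delC_restrictLink_singleton] at this
  | cons x s hxs hs ihs =>
    have hsx : s ⊆ cons x s hxs := subset_cons hxs
    rw [card_cons] at hcard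
    refine .of_shedding s ?_ (by omega) ?_ ?_
    · simpa only [erase_cons] using
        isSheddingFace_delC_restrictLink_erase hWi hdisj hΛ hσ (mem_cons_self x s)
          (by rw [card_cons]; omega)
    · rw [delC_delC_of_subset hsx]
      exact ihs (hsx.trans hσ) (by omega)
    · have hlink_eq := linkC_delC_restrictLink_erase (Λ := Λ) hΓ (mem_cons_self x s)
        (hσ.trans inter_subset_left)
      have := hlink hσ (mem_cons_self x s)
      rw [erase_cons] at hlink_eq this
      rwa [hlink_eq]

lemma delC_restrictLink_eq_self (hWi : G.IsClique (W i : Set V))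
    {σ : Finset (V ⊕ Fin p × Fin (t - 1))} (hσP : σ ⊆ part W t i) (hσΛ : Disjoint σ Λ)
    (hcard : t ≤ #σ + #(Λ ∩ part W t i)) :
    delC (restrictLink Γ S Λ) σ = restrictLink Γ S Λ := by
  refine delC_eq_self fun F hF hσF => ?_
  have hsub : σ ∪ Λ ∩ part W t i ⊆ (F ∪ Λ) ∩ part W t i :=
    union_subset (subset_inter (hσF.trans subset_union_left) hσP)
      (inter_subset_inter_right subset_union_right)
  have := card_le_card hsub
  rw [card_union_of_disjoint (hσΛ.mono_right inter_subset_left)] at this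
  have := card_inter_lt_of_mem_cliqueFreeComplex (isClique_part hWi) hF.2
  omega

lemma kDecomposable_restrictLink_of_inl_mem (hWi : G.IsClique (W i : Set V))
    (hdisj : Disjoint S Λ) (hS : EnoughWhiskers W t S Λ) {a : V} (ha : a ∈ W i)
    (haS : .inl a ∈ S)
    (ih : ∀ S' ⊂ S, ∀ Λ', Disjoint S' Λ' → EnoughWhiskers W t S' Λ' →
      KDecomposable (t - 2) (restrictLink Γ S' Λ')) :
    KDecomposable (t - 2) (restrictLink Γ S Λ) := by
  have hΓ : IsLowerSet Γ := isLowerSet_cliqueFreeComplex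
  have hlt := erase_ssubset haS
  have hdisj' := hdisj.mono_left (erase_subset (.inl a) S)
  by_cases haΛ : insert (.inl a) Λ ∈ Γ
  · refine .of_shedding _ (isSheddingFace_restrictLink_inl hWi hdisj (hS i) ha haS haΛ)
      (by rw [card_singleton]; omega) ?_ ?_
    · rw [delC_restrictLink_singleton]
      exact ih _ hlt _ hdisj' (hS.erase_inl a)
    · rw [linkC_restrictLink hΓ (singleton_subset_iff.2 haS), sdiff_singleton_eq_erase]
      refine ih _ hlt _ (disjoint_union_right.2 ⟨hdisj', ?_⟩)
        ((hS.erase_inl a).mono_right subset_union_left)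
      simp
  · rw [← restrictLink_erase_of_insert_notMem hΓ haΛ]
    exact ih _ hlt _ hdisj' (hS.erase_inl a)

theorem kDecomposable_restrictLink (hW : ∀ i, G.IsClique (W i : Set V))
    (hcov : ∀ v, ∃ i, v ∈ W i) (S Λ : Finset (V ⊕ Fin p × Fin (t - 1)))
    (hdisj : Disjoint S Λ) (hS : EnoughWhiskers W t S Λ) :
    KDecomposable (t - 2) (restrictLink Γ S Λ) := by
  induction S using Finset.strongInduction generalizing Λ with
  | H S ih =>
  have hΓ : IsLowerSet Γ := isLowerSet_cliqueFreeComplex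
  by_cases hΛ : Λ ∉ Γ
  · exact .of_simplex (.inl (restrictLink_eq_empty hΓ hΛ))
  rw [not_not] at hΛ
  by_cases hSΛ : S ∪ Λ ∈ Γ
  · exact .of_simplex (.inr ⟨S, restrictLink_eq_of_union_mem hΓ hSΛ⟩)
  by_cases hV : ∃ a, .inl a ∈ S
  · obtain ⟨a, haS⟩ := hV
    obtain ⟨i, ha⟩ := hcov a
    exact kDecomposable_restrictLink_of_inl_mem (hW i) hdisj hS ha haS ih
  simp only [not_exists] at hV
  obtain ⟨i, hslack⟩ := exists_card_inter_whiskers_add_ge hΛ hSΛ hV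
  have hΛi := card_inter_lt_of_mem_cliqueFreeComplex (isClique_part (hW i)) hΛ
  obtain ⟨σ, hσ, hσcard⟩ := exists_subset_card_eq (s := S ∩ whiskers V t i)
    (n := t - #(Λ ∩ part W t i)) (by omega)
  rw [← delC_restrictLink_eq_self (hW i)
    (hσ.trans (inter_subset_right.trans (whiskers_subset_part W i)))
    (hdisj.mono_left (hσ.trans inter_subset_left)) (by omega)]
  exact kDecomposable_delC_restrictLink (hW i) hdisj hΛ hS hslack ih hσ
    (card_pos.1 (by omega)) (by omega)

end Decomposition

theorem statement15_general {V : Type*} [Fintype V] [DecidableEq V]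
    (G : SimpleGraph V) (p : ℕ) (W : Fin p → Finset V)
    (hPi : IsCliqueVertexPartition G W) (t : ℕ) :
    KDecomposable (t - 2) (cliqueFreeComplex (whiskerGraph G W t) t) ∧
    IsShellable (cliqueFreeComplex (whiskerGraph G W t) t) := by
  have h : KDecomposable (t - 2) (cliqueFreeComplex (whiskerGraph G W t) t) := by
    simpa only [restrictLink_univ_empty] using kDecomposable_restrictLink (t := t) hPi.clique
      hPi.cover univ ∅ (disjoint_empty_right _) enoughWhiskers_univ_empty
  exact ⟨h, h.isShellable isLowerSet_cliqueFreeComplex⟩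

/-- `CF_t(G(Π, t))` is `(t-2)`-decomposable; in particular it is
shellable. -/
theorem statement15 {V : Type*} [Fintype V] [DecidableEq V]
    (G : SimpleGraph V) (p : ℕ) (W : Fin p → Finset V)
    (hPi : IsCliqueVertexPartition G W) (t : ℕ) (ht : 2 ≤ t) :
    KDecomposable (t - 2) (cliqueFreeComplex (whiskerGraph G W t) t) ∧
    IsShellable (cliqueFreeComplex (whiskerGraph G W t) t) :=
  statement15_general G p W hPi t
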